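/- Soundness of size-change abstraction: if ρ is a transition relation and 𝒯 a finite set of transition relations with ρ ⊆ ⋃𝒯 (a transition system for ρ), then ρ* ⊆ ⋃ γ(α(𝒯)*), i.e., γ(α(𝒯)*) is a transition invariant for ρ. -/

import Mathlib

def rcomp {S : Type*} (R1 R2 : Set (S × S)) : Set (S × S) :=
  {p | ∃ b, (p.1, b) ∈ R1 ∧ (b, p.2) ∈ R2}

def idRel' (S : Type*) : Set (S × S) := {p | p.1 = p.2}

def rpow {S : Type*} (R : Set (S × S)) : ℕ → Set (S × S)
  | 0 => idRel' S
  | k + 1 => rcomp (rpow R k) R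

/-- A monotonicity constraint over variables `ι ⊕ ι` (unprimed/primed copies of the
norm index set): `lhs ⊳ rhs` with `⊳` strict (`>`) iff `strict = true`, else `≥`. -/
structure MC (ι : Type*) where
  lhs : ι ⊕ ι
  strict : Bool
  rhs : ι ⊕ ι

/-- Valuation of a pair of states: unprimed variables evaluated via the norms at `s1`,
primed variables at `s2`. -/
def pairVal {States ι : Type*} (n : ι → States → ℤ) (s1 s2 : States) : ι ⊕ ι → ℤ :=
  Sum.elim (fun i => n i s1) (fun i => n i s2)

def satMC {States ι : Type*} (n : ι → States → ℤ) (c : MC ι) (p : States × States) : Prop :=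
  if c.strict then pairVal n p.1 p.2 c.lhs > pairVal n p.1 p.2 c.rhs
  else pairVal n p.1 p.2 c.lhs ≥ pairVal n p.1 p.2 c.rhs

/-- Concretization of an SCR (a set of monotonicity constraints). -/
def conc {States ι : Type*} (n : ι → States → ℤ) (T : Set (MC ι)) : Set (States × States) :=
  {p | ∀ c ∈ T, satMC n c p}

/-- Abstraction of a transition relation. -/
def abst {States ι : Type*} (n : ι → States → ℤ) (ρ : Set (States × States)) : Set (MC ι) :=
  {c | ρ ⊆ conc n {c}}

/-- SCR concatenation. -/
def scrComp {States ι : Type*} (n : ι → States → ℤ) (T1 T2 : Set (MC ι)) : Set (MC ι) :=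
  abst n (rcomp (conc n T1) (conc n T2))

/-- Pointwise lifting of `abst` to sets of transition relations. -/
def abstSet {States ι : Type*} (n : ι → States → ℤ) (TS : Set (Set (States × States))) :
    Set (Set (MC ι)) := {T | ∃ ρ ∈ TS, T = abst n ρ}

/-- Pointwise lifting of `conc` to sets of SCRs. -/
def concSet {States ι : Type*} (n : ι → States → ℤ) (D : Set (Set (MC ι))) :
    Set (Set (States × States)) := {R | ∃ T ∈ D, R = conc n T}

/-- `k`-fold power of an SCR set under SCR concatenation, with `D^0 = {α(Id)}`. -/
def scrSetPow {States ι : Type*} (n : ι → States → ℤ) (D : Set (Set (MC ι))) :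
    ℕ → Set (Set (MC ι))
  | 0 => {abst n (idRel' States)}
  | k + 1 => {T | ∃ T1 ∈ scrSetPow n D k, ∃ T2 ∈ D, T = scrComp n T1 T2}

def scrSetStar {States ι : Type*} (n : ι → States → ℤ) (D : Set (Set (MC ι))) :
    Set (Set (MC ι)) := ⋃ k : ℕ, scrSetPow n D k

/-
The abstraction `α` and concretization `γ` form a Galois connection, so every relation is
contained in the concretization of its abstraction. Hence `ρ` is covered by `γ(α(𝒯))`, and a
`ρ`-path of length `k` is covered by the concretization of some `k`-fold SCR concatenation:
the composite `γ(T₁) ∘ γ(T₂)` lies in `γ(α(γ(T₁) ∘ γ(T₂))) = γ(T₁ ∘ T₂)`.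
-/

section SizeChangeAbstraction

variable {States ι : Type*} (n : ι → States → ℤ)

theorem subset_conc_abst (X : Set (States × States)) : X ⊆ conc n (abst n X) :=
  fun _ hp _ hc => hc hp _ rfl

theorem sUnion_subset_sUnion_concSet_abstSet (TS : Set (Set (States × States))) :
    ⋃₀ TS ⊆ ⋃₀ concSet n (abstSet (ι := ι) n TS) := by
  rintro p ⟨R, hR, hp⟩
  exact ⟨_, ⟨abst n R, ⟨R, hR, rfl⟩, rfl⟩, subset_conc_abst n R hp⟩

theorem rpow_subset_sUnion_concSet_scrSetPow {ρ : Set (States × States)} {D : Set (Set (MC ι))}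
    (hρ : ρ ⊆ ⋃₀ concSet n D) (k : ℕ) :
    rpow ρ k ⊆ ⋃₀ concSet n (scrSetPow n D k) := by
  induction k with
  | zero => exact fun p hp => ⟨_, ⟨_, rfl, rfl⟩, subset_conc_abst n _ hp⟩
  | succ k ih =>
    rintro p ⟨b, hpb, hbp⟩
    obtain ⟨_, ⟨T₁, hT₁, rfl⟩, hpb₁⟩ := ih hpb
    obtain ⟨_, ⟨T₂, hT₂, rfl⟩, hbp₂⟩ := hρ hbp
    exact ⟨_, ⟨scrComp n T₁ T₂, ⟨T₁, hT₁, T₂, hT₂, rfl⟩, rfl⟩,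
      subset_conc_abst n _ ⟨b, hpb₁, hbp₂⟩⟩

theorem concSet_mono {D D' : Set (Set (MC ι))} (h : D ⊆ D') : concSet n D ⊆ concSet n D' :=
  fun _ ⟨T, hT, hR⟩ => ⟨T, h hT, hR⟩

theorem scrSetPow_subset_scrSetStar (D : Set (Set (MC ι))) (k : ℕ) :
    scrSetPow n D k ⊆ scrSetStar n D :=
  Set.subset_iUnion (scrSetPow n D) k

end SizeChangeAbstraction

theorem sca_soundness_general {States ι : Type*} (n : ι → States → ℤ)
    (ρ : Set (States × States)) (TS : Set (Set (States × States)))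
    (hsys : ρ ⊆ ⋃₀ TS) :
    (⋃ k : ℕ, rpow ρ k) ⊆ ⋃₀ concSet n (scrSetStar n (abstSet n TS)) := by
  have hcover : ρ ⊆ ⋃₀ concSet n (abstSet (ι := ι) n TS) :=
    hsys.trans (sUnion_subset_sUnion_concSet_abstSet n TS)
  exact Set.iUnion_subset fun k =>
    (rpow_subset_sUnion_concSet_scrSetPow n hcover k).trans
      (Set.sUnion_mono (concSet_mono n (scrSetPow_subset_scrSetStar n _ k)))

theorem sca_soundness {States ι : Type*} (n : ι → States → ℤ)
    (ρ : Set (States × States)) (TS : Set (Set (States × States)))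
    (hfin : TS.Finite) (hsys : ρ ⊆ ⋃₀ TS) :
    (⋃ k : ℕ, rpow ρ k) ⊆ ⋃₀ concSet n (scrSetStar n (abstSet n TS)) :=
  sca_soundness_general n ρ TS hsys
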